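/- arXiv:2309.01577 — 2 statements merged into one kernel-verified Lean document; each statement's English description precedes it below -/
import Mathlib

section
/- In ℂ[x₁,x₂,x₃,x₄] let y₁, y₂, y₃, y₄ be the D₄ basic invariants and define Y₁ = y₁ − (5/4)y₃y₄ + (5/16)y₄³, Y₂ = y₂, Y₃ = y₃ − (1/2)y₄², Y₄ = (1/8)y₄. Then Δ(Y₄) = 1 and Δ(Y₁) = Δ(Y₂) = Δ(Y₃) = 0, where Δp = ∑_{a=1}^{4} ∂²p/∂xₐ². -/
open MvPolynomial

noncomputable section

def y₁D4 : MvPolynomial (Fin 4) ℂ := X 0 ^ 6 + X 1 ^ 6 + X 2 ^ 6 + X 3 ^ 6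
def y₂D4 : MvPolynomial (Fin 4) ℂ := X 0 * X 1 * X 2 * X 3
def y₃D4 : MvPolynomial (Fin 4) ℂ := X 0 ^ 4 + X 1 ^ 4 + X 2 ^ 4 + X 3 ^ 4
def y₄D4 : MvPolynomial (Fin 4) ℂ := X 0 ^ 2 + X 1 ^ 2 + X 2 ^ 2 + X 3 ^ 2

/-- The Laplace operator `Δp = ∑ₐ ∂²p/∂xₐ²`. -/
def lap4 (p : MvPolynomial (Fin 4) ℂ) : MvPolynomial (Fin 4) ℂ :=
  ∑ a, pderiv a (pderiv a p)

/-!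
The Laplacian obeys the product rule `Δ(pq) = Δp·q + 2∇p·∇q + p·Δq`, and on the power sums
`pₖ = ∑ xᵢᵏ` one has `Δpₖ₊₂ = (k+2)(k+1)pₖ` and `∇pⱼ₊₁·∇pₖ₊₁ = (j+1)(k+1)pⱼ₊ₖ`. Since
`y₁, y₃, y₄` are the power sums `p₆, p₄, p₂`, each `Δ(Yᵢ)` becomes an explicit combination of
`p₀ = 4`, `p₂`, `p₄`, `p₂²`, in which the coefficients of `Y₁, Y₃` cancel. `y₂` is harmonic
because it is of degree one in each variable.
-/

namespace MvPolynomial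

variable {σ R : Type*} [CommSemiring R]

theorem pderiv_prod_X_of_notMem {a : σ} {s : Finset σ} (ha : a ∉ s) :
    pderiv a (∏ i ∈ s, X i : MvPolynomial σ R) = 0 := by
  classical
  induction s using Finset.induction_on with
  | empty => simp
  | insert i s hi ih =>
    obtain ⟨hai, has⟩ := not_or.mp (Finset.mem_insert.not.mp ha)
    rw [Finset.prod_insert hi, pderiv_mul, pderiv_X_of_ne (Ne.symm hai), ih has]
    simp

variable [Fintype σ]

def laplacian : MvPolynomial σ R →ₗ[R] MvPolynomial σ R :=
  ∑ a, (pderiv a).toLinearMap ∘ₗ (pderiv a).toLinearMap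

def gradDot (p q : MvPolynomial σ R) : MvPolynomial σ R :=
  ∑ a, pderiv a p * pderiv a q

theorem laplacian_apply (p : MvPolynomial σ R) :
    laplacian p = ∑ a, pderiv a (pderiv a p) := by
  simp [laplacian, LinearMap.sum_apply]

theorem laplacian_mul (p q : MvPolynomial σ R) :
    laplacian (p * q) = laplacian p * q + 2 * gradDot p q + p * laplacian q := by
  simp only [laplacian_apply, gradDot, pderiv_mul, map_add, Finset.mul_sum, Finset.sum_mul,
    ← Finset.sum_add_distrib]
  refine Finset.sum_congr rfl fun a _ => by ring

theorem laplacian_pow (p : MvPolynomial σ R) (n : ℕ) :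
    laplacian (p ^ n) =
      n * p ^ (n - 1) * laplacian p + n * (n - 1 : ℕ) * p ^ (n - 2) * gradDot p p := by
  simp only [laplacian_apply, gradDot, pderiv_pow, pderiv_mul, Derivation.map_natCast,
    Finset.mul_sum, ← Finset.sum_add_distrib]
  refine Finset.sum_congr rfl fun a _ => ?_
  rw [Nat.sub_sub]
  ring

theorem pderiv_psum_succ (a : σ) (k : ℕ) :
    pderiv a (psum σ R (k + 1)) = (k + 1 : MvPolynomial σ R) * X a ^ k := by
  classical
  simp [psum, pderiv_X, Pi.single_apply]

theorem laplacian_psum (k : ℕ) :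
    laplacian (psum σ R (k + 2)) = ((k + 2) * (k + 1) : MvPolynomial σ R) * psum σ R k := by
  simp_rw [laplacian_apply, pderiv_psum_succ, pderiv_mul, pderiv_pow, pderiv_X_self, map_add,
    Derivation.map_natCast, pderiv_one, psum, Finset.mul_sum]
  refine Finset.sum_congr rfl fun a _ => ?_
  push_cast
  ring

theorem gradDot_psum (j k : ℕ) :
    gradDot (psum σ R (j + 1)) (psum σ R (k + 1)) =
      ((j + 1) * (k + 1) : MvPolynomial σ R) * psum σ R (j + k) := by
  simp_rw [gradDot, pderiv_psum_succ, psum, Finset.mul_sum]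
  refine Finset.sum_congr rfl fun a _ => by ring

theorem laplacian_prod_X : laplacian (∏ i, X i : MvPolynomial σ R) = 0 := by
  classical
  refine (laplacian_apply _).trans (Finset.sum_eq_zero fun a _ => ?_)
  have hfree := pderiv_prod_X_of_notMem (R := R) (Finset.notMem_erase a Finset.univ)
  rw [← Finset.mul_prod_erase _ _ (Finset.mem_univ a), pderiv_mul, hfree, pderiv_X_self]
  simp [hfree]

end MvPolynomial

theorem lap4_eq_laplacian : lap4 = laplacian := funext fun p => (laplacian_apply p).symm

theorem y₁D4_eq_psum : y₁D4 = psum (Fin 4) ℂ 6 := by simp [y₁D4, psum, Fin.sum_univ_four]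

theorem y₂D4_eq_prod_X : y₂D4 = ∏ i, X i := by simp [y₂D4, Fin.prod_univ_four]

theorem y₃D4_eq_psum : y₃D4 = psum (Fin 4) ℂ 4 := by simp [y₃D4, psum, Fin.sum_univ_four]

theorem y₄D4_eq_psum : y₄D4 = psum (Fin 4) ℂ 2 := by simp [y₄D4, psum, Fin.sum_univ_four]

/-- The modified `D₄` basic invariants `Y₁ = y₁ - (5/4)y₃y₄ + (5/16)y₄³`, `Y₂ = y₂`,
`Y₃ = y₃ - (1/2)y₄²`, `Y₄ = (1/8)y₄` satisfy `Δ(Y₄) = 1`, `Δ(Y₁) = Δ(Y₂) = Δ(Y₃) = 0`. -/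
theorem statement_11 :
    lap4 (C ((1 : ℂ) / 8) * y₄D4) = 1 ∧
    lap4 (y₁D4 - C ((5 : ℂ) / 4) * y₃D4 * y₄D4 + C ((5 : ℂ) / 16) * y₄D4 ^ 3) = 0 ∧
    lap4 y₂D4 = 0 ∧
    lap4 (y₃D4 - C ((1 : ℂ) / 2) * y₄D4 ^ 2) = 0 := by
  simp only [lap4_eq_laplacian, y₁D4_eq_psum, y₂D4_eq_prod_X, y₃D4_eq_psum, y₄D4_eq_psum,
    C_mul', smul_mul_assoc, map_add, map_sub, map_smul, laplacian_mul, laplacian_pow,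
    laplacian_psum, gradDot_psum, laplacian_prod_X, psum_zero, Fintype.card_fin, Nat.reduceAdd,
    Nat.reduceSub]
  -- `algebra` is only fast when the power sums are opaque atoms
  generalize psum (Fin 4) ℂ 2 = p₂, psum (Fin 4) ℂ 4 = p₄
  refine ⟨?_, ?_, trivial, ?_⟩ <;> algebra
end
end

section
/- (Theorem: consistency of the D₄(a₁) flat-coordinate formulas.) Let t₁, t₂, t₃, t₄, Z ∈ ℂ satisfy Z² − (t₄² + 3t₃² + 24t₂) = 0 and Z ≠ 0. Define y₁ = −(16/9)(216t₁t₃ − 288t₂t₄ + 24t₂Z + 126t₃²t₄ + 3t₃²Z − 44t₄³ + t₄²Z), y₂ = 4(4t₁ − t₃t₄), y₃ = 8(3t₄² − 3t₃² + 8t₂), y₄ = 8t₄. Define the Jacobian entries J_{iα} := ∂yᵢ/∂tₐ + (∂yᵢ/∂Z)·ζₐ, where the partial derivatives of the above polynomial expressions are taken treating t₁,…,t₄,Z as independent variables and ζ₁ = 0, ζ₂ = 12/Z, ζ₃ = 3t₃/Z, ζ₄ = t₄/Z. Define the symmetric matrix g with entries g^{11} = (1/864)(t₄(19t₄² + 63t₃²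 − 144t₂) − 2Z(4t₄² + 3t₃² + 24t₂)), g^{12} = (1/96)t₃(t₄(7t₄ − 2Z) + 3t₃² + 48t₂), g^{22} = (1/288)(t₄(7t₄² + 27t₃² + 144t₂) − 2Z(t₄² + 12t₃² + 24t₂)), g^{13} = (1/18)(6t₂ + 3t₃² − t₄(t₄ + Z)), g^{23} = t₁ + (1/6)t₃(2t₄ − Z), g^{33} = (1/6)(t₄ − 2Z), g^{14} = t₁, g^{24} = t₂, g^{34} = (1/2)t₃, g^{44} = (1/2)t₄. Then for all i, j ∈ {1,2,3,4}: ∑_{α,β=1}^{4} J_{iα} g^{αβ} J_{jβ} = G^{ij}(y₁,y₂,y₃,y₄), where G^{11} = 30y₁y₃ − 180y₂²y₄ + 30y₁y₄² − 30y₃y₄³ + 6y₄⁵, G^{12} = 6y₂y₃, G^{13} = 32y₁y₄ − 96y₂² + 12y₃² − 24y₃y₄² + 4y₄⁴, G^{14} = 12y₁, G^{22} = (1/6)(2y₁ − 3y₃y₄ + y₄³), G^{23} = 4y₂y₄, G^{24} = 8y₂, G^{33} = 16y₁, G^{34} = 8y₃, G^{44} = 4y₄. -/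
open MvPolynomial

noncomputable section

/-- The `D₄` basic invariants as polynomial expressions in the flat coordinates
`t₁, t₂, t₃, t₄` (variables `X 0, …, X 3`) and the auxiliary variable `Z` (variable `X 4`)
of the algebraic Frobenius manifold `D₄(a₁)`. -/
def YD4 : Fin 4 → MvPolynomial (Fin 5) ℂ :=
  ![C (-(16 : ℂ) / 9) *
      (216 * X 0 * X 2 - 288 * X 1 * X 3 + 24 * X 1 * X 4 + 126 * X 2 ^ 2 * X 3
        + 3 * X 2 ^ 2 * X 4 - 44 * X 3 ^ 3 + X 3 ^ 2 * X 4),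
    4 * (4 * X 0 - X 2 * X 3),
    8 * (3 * X 3 ^ 2 - 3 * X 2 ^ 2 + 8 * X 1),
    8 * X 3]

/-- The intersection form of the algebraic Frobenius manifold `D₄(a₁)` in its flat
coordinates `t₁, …, t₄` with auxiliary algebraic variable `Z`. -/
def gD4 (t₁ t₂ t₃ t₄ Z : ℂ) : Matrix (Fin 4) (Fin 4) ℂ :=
  !![(1 / 864) * (t₄ * (19 * t₄ ^ 2 + 63 * t₃ ^ 2 - 144 * t₂)
        - 2 * Z * (4 * t₄ ^ 2 + 3 * t₃ ^ 2 + 24 * t₂)),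
      (1 / 96) * t₃ * (t₄ * (7 * t₄ - 2 * Z) + 3 * t₃ ^ 2 + 48 * t₂),
      (1 / 18) * (6 * t₂ + 3 * t₃ ^ 2 - t₄ * (t₄ + Z)),
      t₁;
    (1 / 96) * t₃ * (t₄ * (7 * t₄ - 2 * Z) + 3 * t₃ ^ 2 + 48 * t₂),
      (1 / 288) * (t₄ * (7 * t₄ ^ 2 + 27 * t₃ ^ 2 + 144 * t₂)
        - 2 * Z * (t₄ ^ 2 + 12 * t₃ ^ 2 + 24 * t₂)),
      t₁ + (1 / 6) * t₃ * (2 * t₄ - Z),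
      t₂;
    (1 / 18) * (6 * t₂ + 3 * t₃ ^ 2 - t₄ * (t₄ + Z)),
      t₁ + (1 / 6) * t₃ * (2 * t₄ - Z),
      (1 / 6) * (t₄ - 2 * Z),
      (1 / 2) * t₃;
    t₁, t₂, (1 / 2) * t₃, (1 / 2) * t₄]

/-- The `D₄` intersection form expressed in the basic invariants `y₁, …, y₄`. -/
def GD4 (y₁ y₂ y₃ y₄ : ℂ) : Matrix (Fin 4) (Fin 4) ℂ :=
  !![30 * y₁ * y₃ - 180 * y₂ ^ 2 * y₄ + 30 * y₁ * y₄ ^ 2 - 30 * y₃ * y₄ ^ 3 + 6 * y₄ ^ 5,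
      6 * y₂ * y₃,
      32 * y₁ * y₄ - 96 * y₂ ^ 2 + 12 * y₃ ^ 2 - 24 * y₃ * y₄ ^ 2 + 4 * y₄ ^ 4,
      12 * y₁;
    6 * y₂ * y₃, (1 / 6) * (2 * y₁ - 3 * y₃ * y₄ + y₄ ^ 3), 4 * y₂ * y₄, 8 * y₂;
    32 * y₁ * y₄ - 96 * y₂ ^ 2 + 12 * y₃ ^ 2 - 24 * y₃ * y₄ ^ 2 + 4 * y₄ ^ 4,
      4 * y₂ * y₄, 16 * y₁, 8 * y₃;
    12 * y₁, 8 * y₂, 8 * y₃, 4 * y₄]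

/-! On the curve `Z² = t₄² + 3t₃² + 24t₂` the only `Z`-dependent invariant has
`∂y₁/∂Z = -(16/9)(24t₂ + 3t₃² + t₄²) = -(16/9)Z²`, so the correction
`(∂y₁/∂Z)·ζ = -(16/9)Z·(0, 12, 3t₃, t₄)` is polynomial and the Jacobian `J` of `t ↦ y(t, Z(t))`
is the polynomial matrix `jacobianD4`. Solving the relation for `t₂` then turns `J g Jᵀ = G(y)`
into a polynomial identity in `t₁, t₃, t₄, Z`. -/

open Matrix

theorem MvPolynomial.pderiv_ofNat {σ R : Type*} [CommSemiring R] (i : σ) (n : ℕ) [n.AtLeastTwo] :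
    pderiv i (ofNat(n) : MvPolynomial σ R) = 0 := by
  rw [← map_ofNat C n, pderiv_C]

theorem Matrix.mul_mul_transpose_apply {m n R : Type*} [Fintype n] [CommSemiring R]
    (A : Matrix m n R) (B : Matrix n n R) (i j : m) :
    (A * B * Aᵀ) i j = ∑ α, ∑ β, A i α * B α β * A j β := by
  simp only [mul_apply, transpose_apply, Finset.sum_mul]
  exact Finset.sum_comm

def jacobianD4 (t₁ t₂ t₃ t₄ Z : ℂ) : Matrix (Fin 4) (Fin 4) ℂ :=
  !![-384 * t₃, 512 * t₄ - 64 * Z, -384 * t₁ - 448 * t₃ * t₄ - 16 * t₃ * Z,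
      512 * t₂ - 224 * t₃ ^ 2 + (2112 / 9) * t₄ ^ 2 - (16 / 3) * t₄ * Z;
    16, 0, -4 * t₄, -4 * t₃;
    0, 64, -48 * t₃, 48 * t₄;
    0, 0, 0, 8]

section

variable {t₁ t₂ t₃ t₄ Z : ℂ}

theorem jacobianD4_apply (hrel : Z ^ 2 - (t₄ ^ 2 + 3 * t₃ ^ 2 + 24 * t₂) = 0) (hZ : Z ≠ 0)
    (i α : Fin 4) :
    jacobianD4 t₁ t₂ t₃ t₄ Z i α =
      eval ![t₁, t₂, t₃, t₄, Z] (pderiv α.castSucc (YD4 i)) +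
        eval ![t₁, t₂, t₃, t₄, Z] (pderiv (4 : Fin 5) (YD4 i)) *
          ![0, 12 / Z, 3 * t₃ / Z, t₄ / Z] α := by
  obtain rfl : t₂ = (Z ^ 2 - t₄ ^ 2 - 3 * t₃ ^ 2) / 24 := by linear_combination -hrel / 24
  fin_cases i <;> fin_cases α <;> simp [YD4, jacobianD4, pderiv_ofNat] <;> field_simp <;> ring

theorem jacobianD4_mul_gD4_mul_transpose (hrel : Z ^ 2 - (t₄ ^ 2 + 3 * t₃ ^ 2 + 24 * t₂) = 0) :
    jacobianD4 t₁ t₂ t₃ t₄ Z * gD4 t₁ t₂ t₃ t₄ Z * (jacobianD4 t₁ t₂ t₃ t₄ Z)ᵀ =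
      GD4 (eval ![t₁, t₂, t₃, t₄, Z] (YD4 0)) (eval ![t₁, t₂, t₃, t₄, Z] (YD4 1))
        (eval ![t₁, t₂, t₃, t₄, Z] (YD4 2)) (eval ![t₁, t₂, t₃, t₄, Z] (YD4 3)) := by
  obtain rfl : t₂ = (Z ^ 2 - t₄ ^ 2 - 3 * t₃ ^ 2) / 24 := by linear_combination -hrel / 24
  ext i j
  rw [Matrix.mul_mul_transpose_apply]
  fin_cases i <;> fin_cases j <;> simp [YD4, jacobianD4, gD4, GD4, Fin.sum_univ_four] <;> ring

end

/-- Consistency of the `D₄(a₁)` flat-coordinate formulas: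
`∑_{α,β} J_{iα} g^{αβ} J_{jβ} = G^{ij}(y₁, …, y₄)`, where
`J_{iα} = ∂yᵢ/∂tₐ + (∂yᵢ/∂Z)·ζₐ` with `ζ = (0, 12/Z, 3t₃/Z, t₄/Z)`. -/
theorem statement_12 (t₁ t₂ t₃ t₄ Z : ℂ)
    (hrel : Z ^ 2 - (t₄ ^ 2 + 3 * t₃ ^ 2 + 24 * t₂) = 0) (hZ : Z ≠ 0) :
    ∀ i j : Fin 4,
      (∑ α : Fin 4, ∑ β : Fin 4,
        (eval ![t₁, t₂, t₃, t₄, Z] (pderiv α.castSucc (YD4 i)) +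
            eval ![t₁, t₂, t₃, t₄, Z] (pderiv (4 : Fin 5) (YD4 i)) *
              ![0, 12 / Z, 3 * t₃ / Z, t₄ / Z] α) *
          gD4 t₁ t₂ t₃ t₄ Z α β *
          (eval ![t₁, t₂, t₃, t₄, Z] (pderiv β.castSucc (YD4 j)) +
            eval ![t₁, t₂, t₃, t₄, Z] (pderiv (4 : Fin 5) (YD4 j)) *
              ![0, 12 / Z, 3 * t₃ / Z, t₄ / Z] β))
      = GD4 (eval ![t₁, t₂, t₃, t₄, Z] (YD4 0)) (eval ![t₁, t₂, t₃, t₄, Z] (YD4 1))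
          (eval ![t₁, t₂, t₃, t₄, Z] (YD4 2)) (eval ![t₁, t₂, t₃, t₄, Z] (YD4 3)) i j := by
  intro i j
  simp_rw [← jacobianD4_apply hrel hZ]
  rw [← Matrix.mul_mul_transpose_apply, jacobianD4_mul_gD4_mul_transpose hrel]
end
end
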